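/- For every positive real λ and every nonnegative integer m, ∫₀¹ z^(4m) cos(λ z²) dz = ((-1)^m Γ(2m+1/2) / (2 λ^(2m))) · ( √(2/λ) · C(√(2λ/π)) − cos(λ) Σ_{j=0}^{m-1} (−λ²)^j/Γ(2j+3/2) − λ sin(λ) Σ_{j=0}^{m-1} (−λ²)^j/Γ(2j+5/2) ). -/

import Mathlib

open Real Finset

/-!
Write `I p = ∫₀¹ z^p cos (λ z²) dz`. Differentiating
`z^(p+3) sin (λ z²) / (2λ) + (p+3) z^(p+1) cos (λ z²) / (4λ²)` gives the recurrence
`I (p+4) = sin λ / (2λ) + (p+3) cos λ / (4λ²) - (p+3)(p+1)/(4λ²) · I p`.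
The prefactor `s m = (-1)^m Γ(2m+1/2) / (2 λ^(2m))` satisfies
`s (m+1) = -(4m+3)(4m+1)/(4λ²) · s m` by `Γ(s+1) = s Γ(s)`, so `I (4m) / s m` telescopes into the two
partial sums. At `m = 0` the substitution `t = z √(2λ/π)` and `Γ(1/2) = √π` give the Fresnel term.
-/

noncomputable def fresnelC (x : ℝ) : ℝ := ∫ t in (0:ℝ)..x, Real.cos (π * t ^ 2 / 2)

noncomputable def cosSqMoment (lam : ℝ) (p : ℕ) : ℝ :=
  ∫ z in (0:ℝ)..1, z ^ p * Real.cos (lam * z ^ 2)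

theorem cosSqMoment_zero {lam : ℝ} (hlam : 0 < lam) :
    cosSqMoment lam 0 = √π / 2 * (√(2 / lam) * fresnelC √(2 * lam / π)) := by
  set u := √(2 * lam / π)
  have hu : 0 < u := Real.sqrt_pos.mpr (by positivity)
  have hu_sq : u ^ 2 = 2 * lam / π := Real.sq_sqrt (by positivity)
  have hu_inv : √π / 2 * √(2 / lam) = u⁻¹ := by
    refine eq_inv_of_mul_eq_one_left ?_
    rw [div_mul_eq_mul_div, div_mul_eq_mul_div, ← Real.sqrt_mul pi_pos.le,
      ← Real.sqrt_mul (by positivity), show π * (2 / lam) * (2 * lam / π) = 2 ^ 2 by field_simp,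
      Real.sqrt_sq zero_le_two, div_self two_ne_zero]
  have h := intervalIntegral.integral_comp_mul_left (fun t => Real.cos (π * t ^ 2 / 2))
    (a := 0) (b := 1) hu.ne'
  simp only [mul_zero, mul_one, mul_pow, hu_sq] at h
  rw [← mul_assoc, hu_inv, fresnelC, ← smul_eq_mul, ← h, cosSqMoment]
  congr 1 with z
  field_simp

theorem hasDerivAt_cosSqMoment_antideriv {lam : ℝ} (hlam : lam ≠ 0) (p : ℕ) (x : ℝ) :
    HasDerivAt (fun z => z ^ (p + 3) * Real.sin (lam * z ^ 2) / (2 * lam)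
        + (p + 3) * z ^ (p + 1) * Real.cos (lam * z ^ 2) / (4 * lam ^ 2))
      (x ^ (p + 4) * Real.cos (lam * x ^ 2)
        + (p + 3) * (p + 1) / (4 * lam ^ 2) * (x ^ p * Real.cos (lam * x ^ 2))) x := by
  have hsq : HasDerivAt (fun z => lam * z ^ 2) (lam * (2 * x)) x := by
    simpa using (hasDerivAt_pow 2 x).const_mul lam
  have h := ((((hasDerivAt_pow (p + 3) x).mul hsq.sin).div_const (2 * lam)).add
    ((((hasDerivAt_pow (p + 1) x).const_mul ((p : ℝ) + 3)).mul hsq.cos).div_const (4 * lam ^ 2)))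
  refine h.congr_deriv ?_
  rw [show p + 3 - 1 = p + 2 by omega, Nat.add_sub_cancel]
  push_cast
  field_simp
  ring

theorem cosSqMoment_add_four {lam : ℝ} (hlam : lam ≠ 0) (p : ℕ) :
    cosSqMoment lam (p + 4) = Real.sin lam / (2 * lam) + (p + 3) * Real.cos lam / (4 * lam ^ 2)
      - (p + 3) * (p + 1) / (4 * lam ^ 2) * cosSqMoment lam p := by
  have hint := intervalIntegral.integral_eq_sub_of_hasDerivAt
    (fun x _ => hasDerivAt_cosSqMoment_antideriv hlam p x)
    (Continuous.intervalIntegrable (by fun_prop) 0 1)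
  rw [intervalIntegral.integral_add (Continuous.intervalIntegrable (by fun_prop) 0 1)
    (Continuous.intervalIntegrable (by fun_prop) 0 1), intervalIntegral.integral_const_mul] at hint
  simp only [cosSqMoment]
  norm_num at hint
  linarith

noncomputable def momentScale (lam : ℝ) (m : ℕ) : ℝ :=
  (-1) ^ m * Real.Gamma (2 * m + 1 / 2) / (2 * lam ^ (2 * m))

theorem momentScale_ne_zero {lam : ℝ} (hlam : lam ≠ 0) (m : ℕ) : momentScale lam m ≠ 0 := by
  have hΓ := Real.Gamma_pos_of_pos (show (0 : ℝ) < 2 * m + 1 / 2 by positivity)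
  unfold momentScale
  positivity

theorem cosSqMoment_div_momentScale_succ {lam : ℝ} (hlam : lam ≠ 0) (m : ℕ) :
    cosSqMoment lam (4 * (m + 1)) / momentScale lam (m + 1) =
      cosSqMoment lam (4 * m) / momentScale lam m
        - Real.cos lam * ((-(lam ^ 2)) ^ m / Real.Gamma (2 * m + 3 / 2))
        - lam * Real.sin lam * ((-(lam ^ 2)) ^ m / Real.Gamma (2 * m + 5 / 2)) := by
  have hΓ : Real.Gamma (2 * m + 1 / 2) ≠ 0 := (Real.Gamma_pos_of_pos (by positivity)).ne'
  have hΓ₃ : Real.Gamma (2 * m + 3 / 2) = (2 * m + 1 / 2) * Real.Gamma (2 * m + 1 / 2) := by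
    rw [← Real.Gamma_add_one (by positivity)]; ring_nf
  have hΓ₅ : Real.Gamma (2 * m + 5 / 2) = (2 * m + 3 / 2) * Real.Gamma (2 * m + 3 / 2) := by
    rw [← Real.Gamma_add_one (by positivity)]; ring_nf
  rw [show 4 * (m + 1) = 4 * m + 4 by ring, cosSqMoment_add_four hlam]
  simp only [momentScale]
  push_cast
  rw [show 2 * ((m : ℝ) + 1) + 1 / 2 = 2 * m + 5 / 2 by ring, hΓ₅, hΓ₃]
  rcases neg_one_pow_eq_or ℝ m with hε | hε <;>
    simp only [neg_pow (lam ^ 2), pow_succ (-1 : ℝ), hε] <;> field_simp <;> ring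

theorem cosSqMoment_div_momentScale {lam : ℝ} (hlam : 0 < lam) (m : ℕ) :
    cosSqMoment lam (4 * m) / momentScale lam m =
      √(2 / lam) * fresnelC √(2 * lam / π)
        - Real.cos lam * ∑ j ∈ range m, (-(lam ^ 2)) ^ j / Real.Gamma (2 * j + 3 / 2)
        - lam * Real.sin lam * ∑ j ∈ range m, (-(lam ^ 2)) ^ j / Real.Gamma (2 * j + 5 / 2) := by
  induction m with
  | zero =>
    have hπ : √π ≠ 0 := (Real.sqrt_pos.mpr pi_pos).ne'
    simp only [momentScale, cosSqMoment_zero hlam, Nat.cast_zero, mul_zero, zero_add, pow_zero,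
      Real.Gamma_one_half_eq, range_zero, sum_empty, sub_zero]
    field_simp
  | succ m ih =>
    rw [cosSqMoment_div_momentScale_succ hlam.ne', ih, sum_range_succ, sum_range_succ]
    ring

theorem stmt_11 (lam : ℝ) (hlam : 0 < lam) (m : ℕ) :
    ∫ z in (0:ℝ)..1, z ^ (4 * m) * Real.cos (lam * z ^ 2) =
      ((-1 : ℝ) ^ m * Real.Gamma (2 * m + 1 / 2) / (2 * lam ^ (2 * m))) *
        (Real.sqrt (2 / lam) * fresnelC (Real.sqrt (2 * lam / π))
          - Real.cos lam * ∑ j ∈ Finset.range m, (-(lam ^ 2)) ^ j / Real.Gamma (2 * j + 3 / 2)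
          - lam * Real.sin lam *
              ∑ j ∈ Finset.range m, (-(lam ^ 2)) ^ j / Real.Gamma (2 * j + 5 / 2)) := by
  rw [← cosSqMoment_div_momentScale hlam]
  exact (mul_div_cancel₀ _ (momentScale_ne_zero hlam.ne' m)).symm
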